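/- Let I ≠ 0 be a stable monomial ideal generated in degree d and m = (x₁,...,x_n). Then m^d is strongly linear over I, i.e., there is a chain I = I₀ ⊆ I₁ ⊆ ... ⊆ I_s = m^d where each I_{j+1} = I_j + v_j·m for some monomial v_j of degree d−1 with I_j : v_j generated by variables. -/

import Mathlib

open MvPolynomial

/-- The monomial `x^u` in the polynomial ring `K[x_i : i ∈ σ]`. -/
noncomputable def mon (K : Type) [Field K] {σ : Type} (u : σ →₀ ℕ) :
    MvPolynomial σ K := MvPolynomial.monomial u 1

/-- Total degree of an exponent vector. -/
def mdeg {σ : Type} (u : σ →₀ ℕ) : ℕ := u.sum fun _ e => e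

/-- The monomial ideal generated by the monomials with exponent vectors in `S`. -/
noncomputable def monIdeal (K : Type) [Field K] {σ : Type} (S : Set (σ →₀ ℕ)) :
    Ideal (MvPolynomial σ K) := Ideal.span ((mon K) '' S)

/-- An ideal is generated by variables. -/
def genByVars {K : Type} [Field K] {σ : Type} (J : Ideal (MvPolynomial σ K)) : Prop :=
  ∃ A : Set σ, J = Ideal.span ((fun i => (X i : MvPolynomial σ K)) '' A)

/-- An ideal is generated by linear forms. -/
def genByLinForms {K : Type} [Field K] {σ : Type} (J : Ideal (MvPolynomial σ K)) : Prop :=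
  ∃ S : Set (MvPolynomial σ K), (∀ f ∈ S, f.IsHomogeneous 1) ∧ J = Ideal.span S

/-- `S` is an antichain under divisibility of monomials, i.e. it is the minimal
monomial generating set `G(I)` of the monomial ideal `I` it generates. -/
def IsMinGenSet {σ : Type} (S : Set (σ →₀ ℕ)) : Prop :=
  ∀ u ∈ S, ∀ v ∈ S, u ≤ v → u = v

/-- A monomial ideal, presented by its minimal monomial generating set `S`, is
quasi-linear if for every `u ∈ S` the colon ideal `(G(I) \ {u}) : u` is generated
by variables. -/
def QuasiLinear (K : Type) [Field K] {σ : Type} (S : Set (σ →₀ ℕ)) : Prop :=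
  ∀ u ∈ S, genByVars (Submodule.colon (monIdeal K (S \ {u})) (Ideal.span {mon K u}))

/-- A minimal graded free resolution of an ideal `I` in a polynomial ring:
graded free modules `F i = ⊕_k R(-dg i k)` of rank `b i`, differentials
`F (i+1) → F i` given by the matrices `A i`, whose entries are homogeneous of the
appropriate degree and of positive degree (this is minimality, i.e. all entries lie
in the graded maximal ideal), together with an augmentation `F 0 → I` given by the
homogeneous generators `g`, everything being exact. -/
structure MinFreeRes {K : Type} [Field K] {σ : Type} (I : Ideal (MvPolynomial σ K)) where
  b : ℕ → ℕ
  dg : (i : ℕ) → Fin (b i) → ℕ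
  g : Fin (b 0) → MvPolynomial σ K
  A : (i : ℕ) → Matrix (Fin (b i)) (Fin (b (i+1))) (MvPolynomial σ K)
  g_hom : ∀ k, (g k).IsHomogeneous (dg 0 k)
  A_hom : ∀ i k l, A i k l = 0 ∨
    ((A i k l).IsHomogeneous (dg (i+1) l - dg i k) ∧ dg i k < dg (i+1) l)
  aug_range : LinearMap.range (Fintype.linearCombination (MvPolynomial σ K)
      g) = I
  aug_exact : LinearMap.ker (Fintype.linearCombination (MvPolynomial σ K)
      g) = LinearMap.range ((A 0).mulVecLin)
  is_exact : ∀ i, LinearMap.ker ((A i).mulVecLin) = LinearMap.range ((A (i+1)).mulVecLin)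

/-- The graded Betti number `β_{i,j}` read off from a minimal graded free resolution:
the number of generators of the `i`-th free module of degree `j`. -/
noncomputable def MinFreeRes.beta {K : Type} [Field K] {σ : Type}
    {I : Ideal (MvPolynomial σ K)} (res : MinFreeRes I) (i j : ℕ) : ℕ :=
  (Finset.univ.filter fun k => res.dg i k = j).card

/-- `I` has a `d`-linear resolution: it has a minimal graded free resolution in which the
`i`-th free module is generated entirely in degree `i + d`, i.e. `β_{i,j}(I) = 0`
whenever `j - i ≠ d`. -/
def HasLinRes {K : Type} [Field K] {σ : Type} (I : Ideal (MvPolynomial σ K))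
    (d : ℕ) : Prop :=
  ∃ res : MinFreeRes I, ∀ i k, res.dg i k = i + d

/-- `reg I ≤ r`: a minimal graded free resolution of `I` has all generators of the
`i`-th free module in degrees `≤ i + r`, i.e. `β_{i,j}(I) = 0` whenever `j - i > r`. -/
def RegLE {K : Type} [Field K] {σ : Type} (I : Ideal (MvPolynomial σ K)) (r : ℕ) : Prop :=
  ∃ res : MinFreeRes I, ∀ i k, res.dg i k ≤ i + r

/-- A monomial ideal `I` is stable if for every monomial `x^w ∈ I` with largest variable
`x_j` dividing it and every `i ≤ j`, the monomial `x^w·x_i/x_j` lies in `I`. -/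
def StableIdeal (K : Type) [Field K] {n : ℕ} (I : Ideal (MvPolynomial (Fin n) K)) : Prop :=
  ∀ w : Fin n →₀ ℕ, mon K w ∈ I → ∀ j : Fin n, w j ≠ 0 → (∀ l, w l ≠ 0 → l ≤ j) →
    ∀ i : Fin n, i ≤ j → mon K (w + Finsupp.single i 1 - Finsupp.single j 1) ∈ I


/-!
Adjoin the multiples `v·𝔪` of the monomials `v` of degree `d - 1` one at a time, in decreasing
lexicographic order, so that when `v` is reached all lex-larger `v'` have been used. Let `x^t` be
a generator of the current ideal `J` and `c` the first index with `t_c > v_c`. If `x_b ∣ v` for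
some `b > c`, then `x_c v = x_b v'` with `v' = x_c v / x_b` lex-larger than `v`, so `x_c v ∈ J`.
Otherwise `v` only involves `x_1, …, x_c`; a degree count shows that `x^t` is then a generator
of `I`, and stability, applied to move the exponents of `x^t` beyond `c` downwards, gives
`x_c v ∈ I`. So `J : v` is generated by the variables `x_c` with `x_c v ∈ J`.
-/

open MvPolynomial Pointwise

section Monomials

variable {σ : Type}

lemma mdeg_eq_degree (u : σ →₀ ℕ) : mdeg u = u.degree := rfl

lemma mdeg_add (u v : σ →₀ ℕ) : mdeg (u + v) = mdeg u + mdeg v := map_add Finsupp.degree u v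

lemma mdeg_single (i : σ) (k : ℕ) : mdeg (Finsupp.single i k) = k := Finsupp.degree_single i k

lemma mdeg_strictMono : StrictMono (mdeg : (σ →₀ ℕ) → ℕ) := by
  intro u v huv
  obtain ⟨w, rfl⟩ := le_iff_exists_add.mp huv.le
  have hw : w ≠ 0 := by rintro rfl; simp at huv
  rw [mdeg_add, mdeg_eq_degree w]
  have := (Finsupp.degree_eq_zero_iff w).not.mpr hw
  omega

lemma eq_of_le_of_mdeg_eq {u v : σ →₀ ℕ} (h : u ≤ v) (hdeg : mdeg u = mdeg v) : u = v :=
  h.eq_of_not_lt fun hlt => (mdeg_strictMono hlt).ne hdeg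

lemma mem_add_range_single_iff {k : ℕ} {w : σ →₀ ℕ} :
    w ∈ {u | mdeg u = k} + Set.range (fun i => Finsupp.single i 1) ↔ mdeg w = k + 1 := by
  constructor
  · rintro ⟨u, hu, _, ⟨i, rfl⟩, rfl⟩
    rw [mdeg_add, mdeg_single, hu.out]
  · intro hw
    obtain ⟨i, hi⟩ : ∃ i, w i ≠ 0 := by
      by_contra! h
      rw [show w = 0 from Finsupp.ext h, mdeg_eq_degree, map_zero] at hw
      omega
    have hle : Finsupp.single i 1 ≤ w := Finsupp.single_le_iff.mpr (Nat.one_le_iff_ne_zero.mpr hi)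
    refine ⟨w - Finsupp.single i 1, ?_, _, ⟨i, rfl⟩, tsub_add_cancel_of_le hle⟩
    have := mdeg_add (w - Finsupp.single i 1) (Finsupp.single i 1)
    rw [tsub_add_cancel_of_le hle, mdeg_single] at this
    show _ = _
    omega

lemma sum_add_single_apply [DecidableEq σ] (u : σ →₀ ℕ) (i : σ) (s : Finset σ) :
    ∑ l ∈ s, (u + Finsupp.single i 1 : σ →₀ ℕ) l = ∑ l ∈ s, u l + if i ∈ s then 1 else 0 := by
  simp [Finset.sum_add_distrib, Finsupp.single_apply]

variable [LinearOrder σ]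

lemma toLex_add_single_lt_toLex_add_single (u : σ →₀ ℕ) {b c : σ} (hcb : c < b) :
    toLex (u + Finsupp.single b 1) < toLex (u + Finsupp.single c 1) := by
  rw [toLex_add, toLex_add]
  exact add_lt_add_right (Finsupp.Lex.single_lt_iff.mpr hcb) _

lemma mdeg_lt_of_toLex_lt {u v : σ →₀ ℕ} {c : σ} (hv : ∀ l, c < l → v l = 0)
    (hle : ∀ l < c, u l ≤ v l) (hlt : toLex v < toLex u) : mdeg v < mdeg u := by
  obtain ⟨j, hj, hvj⟩ := Finsupp.Lex.lt_iff.mp hlt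
  have hcj : c ≤ j := not_lt.mp fun hjc => (hle j hjc).not_gt hvj
  refine mdeg_strictMono (lt_of_le_of_ne (fun l => ?_) fun h => hvj.ne (by rw [h]))
  rcases lt_trichotomy l j with hl | rfl | hl
  · exact (hj l hl).le
  · exact hvj.le
  · simp [hv l (hcj.trans_lt hl)]

end Monomials

section MonomialIdeals

variable {K : Type} [Field K] {σ : Type}

lemma mon_mem_monIdeal_iff {S : Set (σ →₀ ℕ)} {u : σ →₀ ℕ} :
    mon K u ∈ monIdeal K S ↔ ∃ t ∈ S, t ≤ u := by
  unfold monIdeal mon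
  classical
  rw [mem_ideal_span_monomial_image, support_monomial, if_neg one_ne_zero]
  simp

lemma monIdeal_union (S T : Set (σ →₀ ℕ)) :
    monIdeal K (S ∪ T) = monIdeal K S ⊔ monIdeal K T := by
  rw [monIdeal, Set.image_union, Ideal.span_union]; rfl

lemma X_mul_mon (c : σ) (v : σ →₀ ℕ) : X c * mon K v = mon K (v + Finsupp.single c 1) := by
  rw [mon, mon, X, monomial_mul, one_mul, add_comm]

lemma genByVars_colon_of_forall_exists {T : Set (σ →₀ ℕ)} {v : σ →₀ ℕ}
    (h : ∀ t ∈ T, ∃ c, v c < t c ∧ mon K (v + Finsupp.single c 1) ∈ monIdeal K T) :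
    genByVars ((monIdeal K T).colon (Ideal.span {mon K v})) := by
  refine ⟨{c | mon K (v + Finsupp.single c 1) ∈ monIdeal K T}, le_antisymm (fun f hf => ?_) ?_⟩
  · rw [Submodule.mem_colon_span_singleton, smul_eq_mul] at hf
    refine mem_ideal_span_X_image.mpr fun m hm => ?_
    have hmv : m + v ∈ (f * mon K v).support := by
      rw [mem_support_iff, mon, coeff_mul_monomial, mul_one]
      exact mem_support_iff.mp hm
    obtain ⟨t, htT, htle⟩ := mem_ideal_span_monomial_image.mp hf _ hmv
    obtain ⟨c, hvc, hc⟩ := h t htT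
    have := htle c
    exact ⟨c, hc, by simp only [Finsupp.add_apply] at this; omega⟩
  · rw [Ideal.span_le]
    rintro _ ⟨c, hc, rfl⟩
    rw [SetLike.mem_coe, Submodule.mem_colon_span_singleton, smul_eq_mul, X_mul_mon]
    exact hc

end MonomialIdeals

section Stable

variable {K : Type} [Field K] {n : ℕ} {I : Ideal (MvPolynomial (Fin n) K)}

lemma StableIdeal.mon_add_single_mem (hst : StableIdeal K I) {u : Fin n →₀ ℕ} {M i : Fin n}
    (hu : mon K (u + Finsupp.single M 1) ∈ I) (hmax : ∀ l, u l ≠ 0 → l ≤ M) (hi : i ≤ M) :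
    mon K (u + Finsupp.single i 1) ∈ I := by
  have hmax' : ∀ l, (u + Finsupp.single M 1 : Fin n →₀ ℕ) l ≠ 0 → l ≤ M := by
    intro l hl
    by_cases hlM : l = M
    · exact hlM.le
    · exact hmax l (by simpa [Finsupp.single_apply, Ne.symm hlM] using hl)
  have := hst _ hu M (by simp) hmax' i hi
  rwa [add_right_comm, add_tsub_cancel_right] at this

lemma StableIdeal.exists_exchange_step (hst : StableIdeal K I) {w z : Fin n →₀ ℕ} {c : Fin n}
    (hw : mon K w ∈ I) (hdeg : mdeg z = mdeg w) (hz : ∀ l, c < l → z l = 0)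
    (hzcw : z c ≤ w c) (hle : ∀ l < c, w l ≤ z l) (hzw : ¬ z ≤ w) :
    ∃ w', mon K w' ∈ I ∧ mdeg z = mdeg w' ∧ z c ≤ w' c ∧ (∀ l < c, w' l ≤ z l) ∧
      ∑ l ∈ Finset.univ.filter (c ≤ ·), w' l < ∑ l ∈ Finset.univ.filter (c ≤ ·), w l := by
  have hwz : ¬ w ≤ z := fun h => hzw (eq_of_le_of_mdeg_eq h hdeg.symm).ge
  obtain ⟨i, hic, hwi⟩ : ∃ i < c, w i < z i := by
    by_contra! h
    refine hzw fun l => ?_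
    rcases lt_trichotomy l c with hl | rfl | hl
    · exact h l hl
    · exact hzcw
    · simp [hz l hl]
  have hw0 : w.support.Nonempty := by
    rw [Finsupp.support_nonempty_iff]
    rintro rfl
    exact hwz fun _ => Nat.zero_le _
  obtain ⟨M, hMw, hmax⟩ := w.support.exists_max_image id hw0
  have hwM : ∀ l, M < l → w l = 0 := fun l hl =>
    Finsupp.notMem_support_iff.mp fun h => (hmax l h).not_gt hl
  have hM : c < M ∨ (M = c ∧ z c < w c) := by
    by_contra! h
    refine hwz fun l => ?_
    rcases lt_trichotomy l c with hl | rfl | hl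
    · exact hle l hl
    · rcases h.1.lt_or_eq with hMl | rfl
      · simp [hwM l hMl]
      · exact h.2 rfl
    · simp [hwM l (h.1.trans_lt hl)]
  have hcM : c ≤ M := hM.elim le_of_lt (·.1.ge)
  -- move one unit of exponent from the largest variable `x_M` of `x^w` down to `x_i`
  obtain ⟨u, rfl⟩ : ∃ u, w = u + Finsupp.single M 1 :=
    ⟨w - Finsupp.single M 1, (tsub_add_cancel_of_le (Finsupp.single_le_iff.mpr
      (Nat.one_le_iff_ne_zero.mpr (Finsupp.mem_support_iff.mp hMw)))).symm⟩
  have hmaxu : ∀ l, u l ≠ 0 → l ≤ M := fun l hl =>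
    hmax l (Finsupp.mem_support_iff.mpr (by simp only [Finsupp.add_apply]; omega))
  refine ⟨u + Finsupp.single i 1, hst.mon_add_single_mem hw hmaxu (hic.le.trans hcM), ?_, ?_,
    fun l hl => ?_, ?_⟩
  · rw [hdeg, mdeg_add, mdeg_add, mdeg_single, mdeg_single]
  · rcases hM with h | ⟨rfl, h⟩
    · simpa [Finsupp.single_apply, h.ne, hic.ne'] using hzcw
    · simp only [Finsupp.add_apply, Finsupp.single_apply, if_neg hic.ne, if_true] at h ⊢
      omega
  · have := hle l hl
    have hMl : M ≠ l := (hl.trans_le hcM).ne'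
    have hMi : M ≠ i := (hic.trans_le hcM).ne'
    simp only [Finsupp.add_apply, Finsupp.single_apply, if_neg hMl, if_neg hMi] at this hwi ⊢
    split_ifs with h
    · subst h; omega
    · omega
  · have hMc : M ∈ Finset.univ.filter (c ≤ ·) := by simpa using hcM
    have hic' : i ∉ Finset.univ.filter (c ≤ ·) := by simpa using hic
    rw [sum_add_single_apply, sum_add_single_apply, if_pos hMc, if_neg hic']
    omega

lemma StableIdeal.mon_mem_of_exchange (hst : StableIdeal K I) {w z : Fin n →₀ ℕ} {c : Fin n}
    (hw : mon K w ∈ I) (hdeg : mdeg z = mdeg w) (hz : ∀ l, c < l → z l = 0)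
    (hzcw : z c ≤ w c) (hle : ∀ l < c, w l ≤ z l) : mon K z ∈ I := by
  induction hk : ∑ l ∈ Finset.univ.filter (c ≤ ·), w l using Nat.strong_induction_on
    generalizing w with
  | _ k ih =>
  by_cases hzw : z ≤ w
  · rwa [eq_of_le_of_mdeg_eq hzw hdeg]
  obtain ⟨w', hw', hdeg', hzcw', hle', hlt⟩ := hst.exists_exchange_step hw hdeg hz hzcw hle hzw
  exact ih _ (hk ▸ hlt) hw' hdeg' hzcw' hle' rfl

end Stable

/-- Exponents of the generators of `I + (x^u · 𝔪 : u ∈ U)` when `S` generates `I`. -/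
def extendGens {σ : Type} (S U : Set (σ →₀ ℕ)) : Set (σ →₀ ℕ) :=
  S ∪ (U + Set.range fun i => Finsupp.single i 1)

section StronglyLinear

variable {K : Type} [Field K] {n : ℕ}

lemma exists_lt_mon_add_single_mem {S : Set (Fin n →₀ ℕ)} (hst : StableIdeal K (monIdeal K S))
    {v : Fin n →₀ ℕ} (hS : ∀ w ∈ S, mdeg w = mdeg v + 1) :
    ∀ t ∈ extendGens S {u | mdeg u = mdeg v ∧ toLex v < toLex u}, ∃ c, v c < t c ∧
      mon K (v + Finsupp.single c 1) ∈
        monIdeal K (extendGens S {u | mdeg u = mdeg v ∧ toLex v < toLex u}) := by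
  intro t ht
  have htdeg : mdeg t = mdeg v + 1 := by
    rcases ht with htS | ⟨u, ⟨hu, -⟩, _, ⟨i, rfl⟩, rfl⟩
    · exact hS t htS
    · rw [mdeg_add, mdeg_single, hu]
  obtain ⟨c₀, hc₀⟩ : ∃ c, v c < t c := by
    by_contra! h
    have := mdeg_strictMono.monotone (show t ≤ v from h)
    omega
  obtain ⟨c, hc, hmin⟩ := WellFounded.has_min wellFounded_lt {c | v c < t c} ⟨c₀, hc₀⟩
  replace hmin : ∀ l < c, t l ≤ v l := fun l hl => not_lt.mp fun h => hmin l h hl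
  by_cases hb : ∃ b, c < b ∧ v b ≠ 0
  · obtain ⟨b, hcb, hvb⟩ := hb
    obtain ⟨u, rfl⟩ : ∃ u, v = u + Finsupp.single b 1 :=
      ⟨v - Finsupp.single b 1, (tsub_add_cancel_of_le (Finsupp.single_le_iff.mpr
        (Nat.one_le_iff_ne_zero.mpr hvb))).symm⟩
    refine ⟨c, hc, mon_mem_monIdeal_iff.mpr
      ⟨_, Or.inr ⟨u + Finsupp.single c 1, ⟨?_, ?_⟩, _, ⟨b, rfl⟩, rfl⟩, (add_right_comm _ _ _).le⟩⟩
    · rw [mdeg_add, mdeg_add, mdeg_single, mdeg_single]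
    · exact toLex_add_single_lt_toLex_add_single u hcb
  push Not at hb
  refine ⟨c, hc, ?_⟩
  rcases ht with htS | ⟨u, ⟨hudeg, hvu⟩, _, ⟨i, rfl⟩, rfl⟩
  · refine Ideal.span_mono (Set.image_mono Set.subset_union_left) <|
      hst.mon_mem_of_exchange (c := c) (Ideal.subset_span ⟨t, htS, rfl⟩) ?_ (fun l hl => ?_) ?_
        fun l hl => ?_
    · rw [mdeg_add, mdeg_single, htdeg]
    · simp [hl.ne, hb l hl]
    · simpa [Finsupp.single_apply] using hc
    · simpa [Finsupp.single_apply, hl.ne'] using hmin l hl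
  · refine absurd hudeg (mdeg_lt_of_toLex_lt hb (fun l hl => ?_) hvu).ne'
    exact le_trans (by simp) (hmin l hl)

end StronglyLinear

section LexEnumeration

variable {σ : Type} [LinearOrder σ]

lemma exists_strictAnti_toLex_enum [Finite σ] (k : ℕ) :
    ∃ (s : ℕ) (V : Fin s → σ →₀ ℕ), StrictAnti (toLex ∘ V) ∧ Set.range V = {u | mdeg u = k} := by
  set F := (Finsupp.finite_of_degree_eq (σ := σ) k).toFinset.map toLex.toEmbedding
  refine ⟨F.card, fun p => ofLex (F.orderEmbOfFin rfl p.rev),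
    (F.orderEmbOfFin rfl).strictMono.comp_strictAnti Fin.rev_strictAnti, ?_⟩
  rw [← Function.comp_def (fun p => ofLex (F.orderEmbOfFin rfl p)), Fin.rev_surjective.range_comp]
  change Set.range (ofLex ∘ F.orderEmbOfFin rfl) = _
  rw [Set.range_comp, Finset.range_orderEmbOfFin]
  ext u
  simp [F, mdeg_eq_degree]

lemma image_Iio_eq_of_strictAnti {s k : ℕ} {V : Fin s → σ →₀ ℕ} (hV : StrictAnti (toLex ∘ V))
    (hrange : Set.range V = {u | mdeg u = k}) (p : Fin s) :
    V '' Set.Iio p = {u | mdeg u = mdeg (V p) ∧ toLex (V p) < toLex u} := by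
  have hk : ∀ q, mdeg (V q) = k := fun q => hrange.subset ⟨q, rfl⟩
  ext u
  constructor
  · rintro ⟨q, hq, rfl⟩
    exact ⟨by rw [hk, hk], hV hq⟩
  · rintro ⟨hu, hlt⟩
    obtain ⟨q, rfl⟩ : u ∈ Set.range V := hrange ▸ (hu.trans (hk p) : mdeg u = k)
    exact ⟨q, hV.lt_iff_gt.mp hlt, rfl⟩

end LexEnumeration

section ExtendGens

variable {K : Type} [Field K] {σ : Type}

@[simp]
lemma extendGens_empty (S : Set (σ →₀ ℕ)) : extendGens S ∅ = S := by
  simp [extendGens]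

lemma extendGens_setOf_mdeg_eq {S : Set (σ →₀ ℕ)} {k : ℕ} (hS : ∀ w ∈ S, mdeg w = k + 1) :
    extendGens S {u | mdeg u = k} = {w | mdeg w = k + 1} := by
  ext w
  rw [extendGens, Set.mem_union, mem_add_range_single_iff]
  exact ⟨fun h => h.elim (hS w) id, Or.inr⟩

lemma monIdeal_extendGens_insert (S U : Set (σ →₀ ℕ)) (v : σ →₀ ℕ) :
    monIdeal K (extendGens S (insert v U)) = monIdeal K (extendGens S U) ⊔
      Ideal.span (Set.range fun i => mon K (v + Finsupp.single i 1)) := by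
  rw [extendGens, extendGens, Set.insert_eq, Set.union_add, ← Set.union_assoc,
    Set.union_right_comm, monIdeal_union]
  congr 1
  rw [monIdeal, Set.singleton_add, ← Set.range_comp, ← Set.range_comp]
  rfl

end ExtendGens

theorem stmt_18_general {K : Type} [Field K] {n d : ℕ} (hd : 1 ≤ d) (S : Set (Fin n →₀ ℕ))
    (hdeg : ∀ w ∈ S, mdeg w = d) (hst : StableIdeal K (monIdeal K S)) :
    ∃ (s : ℕ) (J : Fin (s + 1) → Ideal (MvPolynomial (Fin n) K)),
      J 0 = monIdeal K S ∧
      J (Fin.last s) = monIdeal K {w : Fin n →₀ ℕ | mdeg w = d} ∧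
      ∀ p : Fin s, ∃ v : Fin n →₀ ℕ, mdeg v = d - 1 ∧
        genByVars (Submodule.colon (J p.castSucc) (Ideal.span {mon K v})) ∧
        J p.succ = J p.castSucc ⊔
          Ideal.span (Set.range fun i : Fin n => mon K (v + Finsupp.single i 1)) := by
  obtain ⟨s, V, hV, hrange⟩ := exists_strictAnti_toLex_enum (σ := Fin n) (d - 1)
  have hVdeg : ∀ p, mdeg (V p) = d - 1 := fun p => hrange.subset ⟨p, rfl⟩
  have hS : ∀ w ∈ S, mdeg w = d - 1 + 1 := fun w hw => by rw [hdeg w hw]; omega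
  refine ⟨s, fun p => monIdeal K (extendGens S (V '' {q | (q : ℕ) < p})), ?_, ?_,
    fun p => ⟨V p, hVdeg p, ?_, ?_⟩⟩
  · simp
  · have hall : V '' {q | (q : ℕ) < s} = {u | mdeg u = d - 1} := by
      simp [← hrange]
    simp only [Fin.val_last, hall, extendGens_setOf_mdeg_eq hS, Nat.sub_add_cancel hd]
  · have hprev : {q : Fin s | (q : ℕ) < p.castSucc} = Set.Iio p := rfl
    simp only [hprev, image_Iio_eq_of_strictAnti hV hrange]
    exact genByVars_colon_of_forall_exists <|
      exists_lt_mon_add_single_mem hst fun w hw => by rw [hS w hw, hVdeg]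
  · have hnext :
        {q : Fin s | (q : ℕ) < p.succ} = insert p {q : Fin s | (q : ℕ) < p.castSucc} := by
      ext q
      simp only [Set.mem_ofPred_eq, Set.mem_insert_iff, Fin.val_succ, Fin.val_castSucc, Fin.ext_iff]
      omega
    simp only [hnext, Set.image_insert_eq, monIdeal_extendGens_insert]

/-- Let `I ≠ 0` be a stable monomial ideal generated in degree `d` and
`𝔪 = (x_1, …, x_n)`.  Then `𝔪^d` is strongly linear over `I`: there is a chain
`I = J_0 ⊆ J_1 ⊆ ⋯ ⊆ J_s = 𝔪^d` in which each `J_{p+1} = J_p + v_p·𝔪` for some monomial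
`v_p` of degree `d − 1` such that `J_p : v_p` is generated by variables. -/
theorem stmt_18 {K : Type} [Field K] {n d : ℕ} (hd : 1 ≤ d) (S : Set (Fin n →₀ ℕ))
    (hdeg : ∀ w ∈ S, mdeg w = d) (hst : StableIdeal K (monIdeal K S))
    (hne : monIdeal K S ≠ ⊥) :
    ∃ (s : ℕ) (J : Fin (s + 1) → Ideal (MvPolynomial (Fin n) K)),
      J 0 = monIdeal K S ∧
      J (Fin.last s) = monIdeal K {w : Fin n →₀ ℕ | mdeg w = d} ∧
      ∀ p : Fin s, ∃ v : Fin n →₀ ℕ, mdeg v = d - 1 ∧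
        genByVars (Submodule.colon (J p.castSucc) (Ideal.span {mon K v})) ∧
        J p.succ = J p.castSucc ⊔
          Ideal.span (Set.range fun i : Fin n => mon K (v + Finsupp.single i 1)) :=
  stmt_18_general hd S hdeg hst
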